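/- Let J be uniform on [n] and, conditional on J = j, let w be a Bernoulli random variable with mean 1/2 − ε if the coordinate index equals j and mean 1/2 otherwise. Then the mutual information between J and a single Bernoulli observation w_i (at a fixed coordinate i) satisfies I(J; w_i) ≤ 8ε²/n, for 0 < ε ≤ 1/4. -/

import Mathlib

open Finset

open Classical in
/-- Probability of an event under a probability mass function `p` on a finite sample space. -/
noncomputable def pr {Ω : Type*} [Fintype Ω] (p : Ω → ℝ) (s : Ω → Prop) : ℝ :=
  ∑ ω : Ω, if s ω then p ω else 0

/-- Mutual information `I(X;Z)` of discrete random variables on a finite probability space,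
with natural logarithm. -/
noncomputable def mutualInfo {Ω A C : Type*} [Fintype Ω] [Fintype A] [Fintype C]
    (p : Ω → ℝ) (X : Ω → A) (Z : Ω → C) : ℝ :=
  ∑ x : A, ∑ z : C,
    pr p (fun ω => X ω = x ∧ Z ω = z) *
      Real.log (pr p (fun ω => X ω = x ∧ Z ω = z) /
        (pr p (fun ω => X ω = x) * pr p (fun ω => Z ω = z)))

/-!
Since `log t ≤ t - 1`, mutual information is bounded by the χ²-information
`∑ P(x,z)² / (P(x) P(z)) - 1`. For the observation `w_i` this is computed exactly:
it equals `4 (n - 1) ε² / (n² - 4ε²)`, which is at most `8ε²/n`.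
-/

section Pr

variable {Ω : Type*} [Fintype Ω] (p : Ω → ℝ)

lemma pr_nonneg (hp0 : ∀ ω, 0 ≤ p ω) (s : Ω → Prop) : 0 ≤ pr p s :=
  sum_nonneg fun ω _ => by split_ifs <;> simp [hp0]

lemma pr_mono (hp0 : ∀ ω, 0 ≤ p ω) {s t : Ω → Prop} (hst : ∀ ω, s ω → t ω) :
    pr p s ≤ pr p t :=
  sum_le_sum fun ω _ => by
    by_cases hs : s ω
    · simp [hs, hst ω hs]
    · by_cases ht : t ω <;> simp [hs, ht, hp0]

lemma sum_pr_eq_and {A : Type*} [Fintype A] (X : Ω → A) (s : Ω → Prop) :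
    ∑ x : A, pr p (fun ω => X ω = x ∧ s ω) = pr p s := by
  classical
  unfold pr
  rw [sum_comm]
  refine sum_congr rfl fun ω _ => ?_
  by_cases hs : s ω <;> simp [hs]

lemma sum_sum_pr_eq {A C : Type*} [Fintype A] [Fintype C] (X : Ω → A) (Z : Ω → C) :
    ∑ x : A, ∑ z : C, pr p (fun ω => X ω = x ∧ Z ω = z) = ∑ ω, p ω :=
  calc ∑ x : A, ∑ z : C, pr p (fun ω => X ω = x ∧ Z ω = z)
      = ∑ x : A, pr p (fun ω => X ω = x) := by simp_rw [and_comm (a := X _ = _), sum_pr_eq_and]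
    _ = pr p (fun _ => True) := by simpa only [and_true] using sum_pr_eq_and p X fun _ => True
    _ = ∑ ω, p ω := by simp [pr]

lemma pr_and_eq_false (s : Ω → Prop) (w : Ω → Bool) :
    pr p (fun ω => s ω ∧ w ω = false) = pr p s - pr p (fun ω => s ω ∧ w ω = true) := by
  unfold pr
  rw [eq_sub_iff_add_eq, ← sum_add_distrib]
  refine sum_congr rfl fun ω _ => ?_
  by_cases hs : s ω <;> cases h : w ω <;> simp [hs, h]

end Pr

lemma sum_ite_eq_add_mul {ι : Type*} [Fintype ι] [DecidableEq ι] (i : ι) (a b : ℝ) :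
    ∑ j : ι, (if j = i then a else b) = a + (Fintype.card ι - 1) * b := by
  rw [← add_sum_erase _ _ (mem_univ i), if_pos rfl,
    sum_congr rfl fun j hj => if_neg (ne_of_mem_erase hj), sum_const,
    card_erase_of_mem (mem_univ i), card_univ, nsmul_eq_mul,
    Nat.cast_sub (Fintype.card_pos_iff.mpr ⟨i⟩), Nat.cast_one]

lemma mul_log_div_le {f g : ℝ} (hf : 0 ≤ f) (hg : 0 < g) :
    f * Real.log (f / g) ≤ f ^ 2 / g - f := by
  rcases hf.eq_or_lt with rfl | hf
  · simp
  calc f * Real.log (f / g) ≤ f * (f / g - 1) :=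
        mul_le_mul_of_nonneg_left (Real.log_le_sub_one_of_pos (by positivity)) hf.le
    _ = f ^ 2 / g - f := by ring

lemma mutualInfo_le_sum_sq_div_sub {Ω A C : Type*} [Fintype Ω] [Fintype A] [Fintype C]
    (p : Ω → ℝ) (hp0 : ∀ ω, 0 ≤ p ω) (X : Ω → A) (Z : Ω → C) :
    mutualInfo p X Z ≤ ∑ x : A, ∑ z : C, pr p (fun ω => X ω = x ∧ Z ω = z) ^ 2 /
      (pr p (fun ω => X ω = x) * pr p (fun ω => Z ω = z)) - ∑ ω, p ω := by
  rw [← sum_sum_pr_eq p X Z, mutualInfo]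
  simp_rw [← sum_sub_distrib]
  gcongr with x _ z _
  have hf := pr_nonneg p hp0 (fun ω => X ω = x ∧ Z ω = z)
  rcases (mul_nonneg (pr_nonneg p hp0 _) (pr_nonneg p hp0 _)).eq_or_lt with hg | hg
  · have hf0 : pr p (fun ω => X ω = x ∧ Z ω = z) = 0 := by
      refine le_antisymm ?_ hf
      rcases mul_eq_zero.mp hg.symm with hX | hZ
      · exact hX ▸ pr_mono p hp0 fun ω h => h.1
      · exact hZ ▸ pr_mono p hp0 fun ω h => h.2
    simp [hf0]
  · exact mul_log_div_le hf hg

lemma chiSq_biased_coordinate_le (N ε : ℝ) (hN : 1 ≤ N) (hε : 0 < ε) (hε' : ε ≤ 1 / 4) :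
    ((1 / N * (1 / 2 - ε)) ^ 2 / (1 / N * (1 / 2 - ε / N)) +
        (N - 1) * ((1 / N * (1 / 2)) ^ 2 / (1 / N * (1 / 2 - ε / N)))) +
      ((1 / N * (1 / 2 + ε)) ^ 2 / (1 / N * (1 / 2 + ε / N)) +
        (N - 1) * ((1 / N * (1 / 2)) ^ 2 / (1 / N * (1 / 2 + ε / N)))) - 1
      ≤ 8 * ε ^ 2 / N := by
  have hminus : 0 < N - 2 * ε := by linarith
  have hslack : 0 ≤ 4 * N ^ 2 + 4 * N - 32 * ε ^ 2 := by nlinarith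
  calc _ = 4 * (N - 1) * ε ^ 2 / ((N - 2 * ε) * (N + 2 * ε)) := by
        field_simp
        ring
    _ ≤ 8 * ε ^ 2 / N := by
        rw [div_le_div_iff₀ (by positivity) (by positivity)]
        nlinarith [mul_nonneg (sq_nonneg ε) hslack]

theorem stmt11_general {Ω : Type*} [Fintype Ω] (n : ℕ)
    (p : Ω → ℝ) (hp0 : ∀ ω, 0 ≤ p ω) (hp1 : ∑ ω : Ω, p ω = 1)
    (J : Ω → Fin n) (hunif : ∀ j : Fin n, pr p (fun ω => J ω = j) = 1 / n)
    (i : Fin n) (w : Ω → Bool) (ε : ℝ) (hε : 0 < ε) (hε' : ε ≤ 1 / 4)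
    (hw : ∀ j : Fin n, pr p (fun ω => J ω = j ∧ w ω = true) =
      if j = i then (1 / n) * (1 / 2 - ε) else (1 / n) * (1 / 2)) :
    mutualInfo p J w ≤ 8 * ε ^ 2 / n := by
  have hN : (1 : ℝ) ≤ n := Nat.one_le_cast.mpr i.pos
  have hwf : ∀ j : Fin n, pr p (fun ω => J ω = j ∧ w ω = false) =
      if j = i then (1 / n) * (1 / 2 + ε) else (1 / n) * (1 / 2) := fun j => by
    rw [pr_and_eq_false, hunif, hw]
    split_ifs <;> ring
  have hmarg : ∀ b, pr p (fun ω => w ω = b) =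
      ∑ j : Fin n, pr p (fun ω => J ω = j ∧ w ω = b) := fun b => (sum_pr_eq_and p J _).symm
  have hqt : pr p (fun ω => w ω = true) = 1 / 2 - ε / n := by
    rw [hmarg, sum_congr rfl fun j _ => hw j, sum_ite_eq_add_mul, Fintype.card_fin]
    field_simp
    ring
  have hqf : pr p (fun ω => w ω = false) = 1 / 2 + ε / n := by
    rw [hmarg, sum_congr rfl fun j _ => hwf j, sum_ite_eq_add_mul, Fintype.card_fin]
    field_simp
    ring
  refine (mutualInfo_le_sum_sq_div_sub p hp0 J w).trans ?_
  simp only [Fintype.sum_bool, hunif, hqt, hqf, hw, hwf, hp1, sum_add_distrib, ite_pow, ite_div]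
  rw [sum_ite_eq_add_mul, sum_ite_eq_add_mul, Fintype.card_fin]
  exact chiSq_biased_coordinate_le n ε hN hε hε'

/-- Let `J` be uniform on `[n]` and let `w` be a Bernoulli observation at a fixed coordinate
`i`, with `P(w = 1 | J = j) = 1/2 - ε` if `j = i` and `1/2` otherwise (stated via the joint
probabilities). Then `I(J; w) ≤ 8ε²/n` for `0 < ε ≤ 1/4`. -/
theorem stmt11 {Ω : Type*} [Fintype Ω] (n : ℕ) (hn : 2 ≤ n)
    (p : Ω → ℝ) (hp0 : ∀ ω, 0 ≤ p ω) (hp1 : ∑ ω : Ω, p ω = 1)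
    (J : Ω → Fin n) (hunif : ∀ j : Fin n, pr p (fun ω => J ω = j) = 1 / n)
    (i : Fin n) (w : Ω → Bool) (ε : ℝ) (hε : 0 < ε) (hε' : ε ≤ 1 / 4)
    (hw : ∀ j : Fin n, pr p (fun ω => J ω = j ∧ w ω = true) =
      if j = i then (1 / n) * (1 / 2 - ε) else (1 / n) * (1 / 2)) :
    mutualInfo p J w ≤ 8 * ε ^ 2 / n :=
  stmt11_general n p hp0 hp1 J hunif i w ε hε hε' hw
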